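/- Star composition does not preserve invertibility: there exist well-behaved invertible binary lenses b₁, b₂ and a well-behaved invertible lens k (the binary identity lens) satisfying the junction conditions, such that the star composition ℓ = k*(b₁,b₂) fails weak invertibility, i.e. there is an update v with ℓ.ppg₁₂(ℓ.ppg₂₁(ℓ.ppg₁₂(v))) ≠ ℓ.ppg₁₂(v). -/

import Mathlib

set_option autoImplicit false

/-- A model space: a category of models and updates, equipped with a relation `K`
of sequentially compatible consecutive updates, a class `D` of mergeable (concurrently
compatible) spans, and a merge operation. -/
structure ModelSpace where
  Obj : Type
  Hom : Obj → Obj → Type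
  id : (A : Obj) → Hom A A
  comp : {A B C : Obj} → Hom A B → Hom B C → Hom A C
  id_comp : ∀ {A B : Obj} (f : Hom A B), comp (id A) f = f
  comp_id : ∀ {A B : Obj} (f : Hom A B), comp f (id B) = f
  assoc : ∀ {A B C E : Obj} (f : Hom A B) (g : Hom B C) (h : Hom C E),
    comp (comp f g) h = comp f (comp g h)
  K : {X A Y : Obj} → Hom X A → Hom A Y → Prop
  D : {A A1 A2 : Obj} → Hom A A1 → Hom A A2 → Prop
  mergeObj : {A A1 A2 : Obj} → (u1 : Hom A A1) → (u2 : Hom A A2) → D u1 u2 → Obj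
  merge1 : {A A1 A2 : Obj} → (u1 : Hom A A1) → (u2 : Hom A A2) → (h : D u1 u2) →
    Hom A1 (mergeObj u1 u2 h)
  merge2 : {A A1 A2 : Obj} → (u1 : Hom A A1) → (u2 : Hom A A2) → (h : D u1 u2) →
    Hom A2 (mergeObj u1 u2 h)
  merge_comm : ∀ {A A1 A2 : Obj} (u1 : Hom A A1) (u2 : Hom A A2) (h : D u1 u2),
    comp u1 (merge1 u1 u2 h) = comp u2 (merge2 u1 u2 h)

/-- Transport an update along an equality of its source object. -/
def ModelSpace.castSrc (M : ModelSpace) {X Y T : M.Obj} (h : X = Y) (f : M.Hom X T) :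
    M.Hom Y T := cast (congrArg (fun Z => M.Hom Z T) h) f

/-- Transport an update along an equality of its target object. -/
def ModelSpace.castTgt (M : ModelSpace) {S T T' : M.Obj} (h : T = T') (f : M.Hom S T) :
    M.Hom S T' := cast (congrArg (fun Z => M.Hom S Z) h) f
/-- A multiary (symmetric) delta lens with amendment, over an index type `ι` of feet. -/
structure SymLens (ι : Type) where
  Sp : ι → ModelSpace
  Corr : Type
  bdry : (i : ι) → Corr → (Sp i).Obj
  ppgObj : (i : ι) → (R : Corr) → {A' : (Sp i).Obj} →
    (Sp i).Hom (bdry i R) A' → (j : ι) → (Sp j).Obj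
  ppg : (i : ι) → (R : Corr) → {A' : (Sp i).Obj} →
    (u : (Sp i).Hom (bdry i R) A') → (j : ι) → (h : j ≠ i) →
    (Sp j).Hom (bdry j R) (ppgObj i R u j)
  amend : (i : ι) → (R : Corr) → {A' : (Sp i).Obj} →
    (u : (Sp i).Hom (bdry i R) A') → (Sp i).Hom A' (ppgObj i R u i)
  ppgCorr : (i : ι) → (R : Corr) → {A' : (Sp i).Obj} →
    (Sp i).Hom (bdry i R) A' → Corr
  ppgCorr_bdry : ∀ (i : ι) (R : Corr) {A' : (Sp i).Obj}
    (u : (Sp i).Hom (bdry i R) A') (j : ι),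
    bdry j (ppgCorr i R u) = ppgObj i R u j
/-- Well-behavedness of a multiary lens: Stability and Reflect1-3. -/
structure SymLens.WellBehaved {ι : Type} (ℓ : SymLens ι) : Prop where
  stab_obj : ∀ (i : ι) (R : ℓ.Corr) (j : ι),
    ℓ.ppgObj i R ((ℓ.Sp i).id (ℓ.bdry i R)) j = ℓ.bdry j R
  stab_ppg : ∀ (i : ι) (R : ℓ.Corr) (j : ι) (h : j ≠ i),
    HEq (ℓ.ppg i R ((ℓ.Sp i).id (ℓ.bdry i R)) j h) ((ℓ.Sp j).id (ℓ.bdry j R))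
  stab_amend : ∀ (i : ι) (R : ℓ.Corr),
    HEq (ℓ.amend i R ((ℓ.Sp i).id (ℓ.bdry i R))) ((ℓ.Sp i).id (ℓ.bdry i R))
  stab_corr : ∀ (i : ι) (R : ℓ.Corr), ℓ.ppgCorr i R ((ℓ.Sp i).id (ℓ.bdry i R)) = R
  reflect1 : ∀ (i : ι) (R : ℓ.Corr) {A' : (ℓ.Sp i).Obj}
    (u : (ℓ.Sp i).Hom (ℓ.bdry i R) A'), (ℓ.Sp i).K u (ℓ.amend i R u)
  reflect2_obj : ∀ (i : ι) (R : ℓ.Corr) {A' : (ℓ.Sp i).Obj}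
    (u : (ℓ.Sp i).Hom (ℓ.bdry i R) A') (j : ι), j ≠ i →
    ℓ.ppgObj i R ((ℓ.Sp i).comp u (ℓ.amend i R u)) j = ℓ.ppgObj i R u j
  reflect2 : ∀ (i : ι) (R : ℓ.Corr) {A' : (ℓ.Sp i).Obj}
    (u : (ℓ.Sp i).Hom (ℓ.bdry i R) A') (j : ι) (h : j ≠ i),
    HEq (ℓ.ppg i R ((ℓ.Sp i).comp u (ℓ.amend i R u)) j h) (ℓ.ppg i R u j h)
  reflect3_obj : ∀ (i : ι) (R : ℓ.Corr) {A' : (ℓ.Sp i).Obj}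
    (u : (ℓ.Sp i).Hom (ℓ.bdry i R) A'),
    ℓ.ppgObj i R ((ℓ.Sp i).comp u (ℓ.amend i R u)) i = ℓ.ppgObj i R u i
  reflect3 : ∀ (i : ι) (R : ℓ.Corr) {A' : (ℓ.Sp i).Obj}
    (u : (ℓ.Sp i).Hom (ℓ.bdry i R) A'),
    HEq (ℓ.amend i R ((ℓ.Sp i).comp u (ℓ.amend i R u))) ((ℓ.Sp i).id (ℓ.ppgObj i R u i))
/-- Weak invertibility (round-tripping) of a multiary lens. -/
def SymLens.Invertible {ι : Type} (ℓ : SymLens ι) : Prop :=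
  ∀ (i : ι) (R : ℓ.Corr) {A' : (ℓ.Sp i).Obj} (u : (ℓ.Sp i).Hom (ℓ.bdry i R) A')
    (j : ι) (hj : j ≠ i),
    ℓ.ppgObj i R (ℓ.ppg j R (ℓ.ppg i R u j hj) i (Ne.symm hj)) j = ℓ.ppgObj i R u j ∧
    HEq (ℓ.ppg i R (ℓ.ppg j R (ℓ.ppg i R u j hj) i (Ne.symm hj)) j hj)
      (ℓ.ppg i R u j hj)
/-- An update of the `i`-th foot is `ℓ`-closed if the lens amends it identically
over every corr at which it can be propagated. -/
def SymLens.ClosedUpd {ι : Type} (ℓ : SymLens ι) (i : ι) {X A' : (ℓ.Sp i).Obj}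
    (u : (ℓ.Sp i).Hom X A') : Prop :=
  ∀ (S : ℓ.Corr) (h : ℓ.bdry i S = X),
    ℓ.ppgObj i S ((ℓ.Sp i).castSrc h.symm u) i = A' ∧
    HEq (ℓ.amend i S ((ℓ.Sp i).castSrc h.symm u)) ((ℓ.Sp i).id A')
/-- A binary symmetric lens between a "base" space `B` and a "view" space `A`. -/
structure BLens (B A : ModelSpace) where
  Corr : Type
  bB : Corr → B.Obj
  bA : Corr → A.Obj
  ppgBAObj : (R : Corr) → {B' : B.Obj} → B.Hom (bB R) B' → A.Obj
  ppgBA : (R : Corr) → {B' : B.Obj} → (u : B.Hom (bB R) B') → A.Hom (bA R) (ppgBAObj R u)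
  amendBObj : (R : Corr) → {B' : B.Obj} → B.Hom (bB R) B' → B.Obj
  amendB : (R : Corr) → {B' : B.Obj} → (u : B.Hom (bB R) B') → B.Hom B' (amendBObj R u)
  ppgBACorr : (R : Corr) → {B' : B.Obj} → B.Hom (bB R) B' → Corr
  ppgBACorr_bB : ∀ (R : Corr) {B' : B.Obj} (u : B.Hom (bB R) B'),
    bB (ppgBACorr R u) = amendBObj R u
  ppgBACorr_bA : ∀ (R : Corr) {B' : B.Obj} (u : B.Hom (bB R) B'),
    bA (ppgBACorr R u) = ppgBAObj R u
  ppgABObj : (R : Corr) → {A' : A.Obj} → A.Hom (bA R) A' → B.Obj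
  ppgAB : (R : Corr) → {A' : A.Obj} → (v : A.Hom (bA R) A') → B.Hom (bB R) (ppgABObj R v)
  amendAObj : (R : Corr) → {A' : A.Obj} → A.Hom (bA R) A' → A.Obj
  amendA : (R : Corr) → {A' : A.Obj} → (v : A.Hom (bA R) A') → A.Hom A' (amendAObj R v)
  ppgABCorr : (R : Corr) → {A' : A.Obj} → A.Hom (bA R) A' → Corr
  ppgABCorr_bB : ∀ (R : Corr) {A' : A.Obj} (v : A.Hom (bA R) A'),
    bB (ppgABCorr R v) = ppgABObj R v
  ppgABCorr_bA : ∀ (R : Corr) {A' : A.Obj} (v : A.Hom (bA R) A'),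
    bA (ppgABCorr R v) = amendAObj R v
/-- A binary lens viewed as a symmetric lens over `Bool` (`false` = base, `true` = view). -/
def BLens.toSym {B A : ModelSpace} (b : BLens B A) : SymLens Bool where
  Sp := fun i => match i with
    | false => B
    | true => A
  Corr := b.Corr
  bdry := fun i => match i with
    | false => fun R => b.bB R
    | true => fun R => b.bA R
  ppgObj := fun i R {A'} u j =>
    match i, A', u, j with
    | false, _, u, false => b.amendBObj R u
    | false, _, u, true => b.ppgBAObj R u
    | true, _, v, false => b.ppgABObj R v
    | true, _, v, true => b.amendAObj R v
  ppg := fun i R {A'} u j hj =>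
    match i, A', u, j, hj with
    | false, _, _, false, hj => absurd rfl hj
    | false, _, u, true, _ => b.ppgBA R u
    | true, _, v, false, _ => b.ppgAB R v
    | true, _, _, true, hj => absurd rfl hj
  amend := fun i R {A'} u =>
    match i, A', u with
    | false, _, u => b.amendB R u
    | true, _, v => b.amendA R v
  ppgCorr := fun i R {A'} u =>
    match i, A', u with
    | false, _, u => b.ppgBACorr R u
    | true, _, v => b.ppgABCorr R v
  ppgCorr_bdry := by
    intro i R A' u j
    cases i <;> cases j
    · exact b.ppgBACorr_bB R u
    · exact b.ppgBACorr_bA R u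
    · exact b.ppgABCorr_bB R u
    · exact b.ppgABCorr_bA R u

/-- Well-behavedness of a binary lens. -/
def BLens.WellBehaved {B A : ModelSpace} (b : BLens B A) : Prop :=
  b.toSym.WellBehaved

/-- (Weak) invertibility of a binary lens. -/
def BLens.Invertible {B A : ModelSpace} (b : BLens B A) : Prop :=
  b.toSym.Invertible

/-- All base-side updates of the binary lens are closed (identity amendments). -/
def BLens.BaseClosed {B A : ModelSpace} (b : BLens B A) : Prop :=
  ∀ (R : b.Corr) {B' : B.Obj} (u : B.Hom (b.bB R) B'),
    b.amendBObj R u = B' ∧ HEq (b.amendB R u) (B.id B')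

/-- A view update is `b`-closed: the lens amends it identically over every
corr at which it can be propagated. -/
def BLens.ClosedA {B A : ModelSpace} (b : BLens B A) {X A' : A.Obj}
    (v : A.Hom X A') : Prop :=
  ∀ (R : b.Corr) (h : b.bA R = X),
    b.amendAObj R (A.castSrc h.symm v) = A' ∧
    HEq (b.amendA R (A.castSrc h.symm v)) (A.id A')
/-- The identity lens: all feet are the same space, corrs are diagonal tuples,
and every update is propagated to itself. -/
def idLens (ι : Type) (A : ModelSpace) : SymLens ι where
  Sp := fun _ => A
  Corr := A.Obj
  bdry := fun _ R => R
  ppgObj := fun _ _ {A'} _ _ => A'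
  ppg := fun _ _ {A'} u _ _ => u
  amend := fun _ _ {A'} _ => A.id A'
  ppgCorr := fun _ _ {A'} _ => A'
  ppgCorr_bdry := fun _ _ {A'} _ _ => rfl
section Star

variable {ι : Type} [DecidableEq ι] (k : SymLens ι) (Bsp : ι → ModelSpace)
  (b : ∀ i, BLens (Bsp i) (k.Sp i))

/-- A corr of the star composition: a central corr together with a corr for each
peripheral binary lens, compatible at the shared feet. -/
structure StarCorr where
  S : k.Corr
  rho : ∀ i, (b i).Corr
  compat : ∀ i, (b i).bA (rho i) = k.bdry i S

/-- The update propagated by `b i` into the `i`-th foot of `k`. -/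
def starU (R : StarCorr k Bsp b) (i : ι) {B' : (Bsp i).Obj}
    (v : (Bsp i).Hom ((b i).bB (R.rho i)) B') :
    (k.Sp i).Hom (k.bdry i R.S) ((b i).ppgBAObj (R.rho i) v) :=
  (k.Sp i).castSrc (R.compat i) ((b i).ppgBA (R.rho i) v)

/-- The update propagated by `k` to the `j`-th foot, re-sourced at `b j`'s view boundary. -/
def starW (R : StarCorr k Bsp b) (i : ι) {B' : (Bsp i).Obj}
    (v : (Bsp i).Hom ((b i).bB (R.rho i)) B') (j : ι) (hj : j ≠ i) :
    (k.Sp j).Hom ((b j).bA (R.rho j)) (k.ppgObj i R.S (starU k Bsp b R i v) j) :=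
  (k.Sp j).castSrc (R.compat j).symm (k.ppg i R.S (starU k Bsp b R i v) j hj)

/-- Star composition of an `ι`-ary lens `k` with binary lenses `b i` sharing its
feet, under the junction conditions `J1`, `J2`. -/
def SymLens.star
    (J1 : ∀ (i : ι) (R : (b i).Corr) {B' : (Bsp i).Obj}
      (u : (Bsp i).Hom ((b i).bB R) B'), k.ClosedUpd i ((b i).ppgBA R u))
    (J2 : ∀ (i j : ι) (hj : j ≠ i) (S : k.Corr) {A' : (k.Sp i).Obj}
      (u : (k.Sp i).Hom (k.bdry i S) A'), (b j).ClosedA (k.ppg i S u j hj)) :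
    SymLens ι where
  Sp := Bsp
  Corr := StarCorr k Bsp b
  bdry := fun i R => (b i).bB (R.rho i)
  ppgObj := fun i R {B'} v j =>
    if h : j = i then
      cast (congrArg (fun z => (Bsp z).Obj) h.symm) ((b i).amendBObj (R.rho i) v)
    else (b j).ppgABObj (R.rho j) (starW k Bsp b R i v j h)
  ppg := fun i R {B'} v j hj =>
    (Bsp j).castTgt (dif_neg hj).symm ((b j).ppgAB (R.rho j) (starW k Bsp b R i v j hj))
  amend := fun i R {B'} v =>
    (Bsp i).castTgt (dif_pos rfl).symm ((b i).amendB (R.rho i) v)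
  ppgCorr := fun i R {B'} v =>
    { S := k.ppgCorr i R.S (starU k Bsp b R i v)
      rho := fun j =>
        if h : j = i then
          cast (congrArg (fun z => (b z).Corr) h.symm) ((b i).ppgBACorr (R.rho i) v)
        else (b j).ppgABCorr (R.rho j) (starW k Bsp b R i v j h)
      compat := by
        intro j
        by_cases h : j = i
        · subst h
          rw [dif_pos rfl, k.ppgCorr_bdry]
          exact ((b j).ppgBACorr_bA (R.rho j) v).trans
            ((J1 j (R.rho j) v R.S (R.compat j).symm).1).symm
        · rw [dif_neg h, k.ppgCorr_bdry]
          exact ((b j).ppgABCorr_bA (R.rho j) _).trans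
            ((J2 i j h R.S (starU k Bsp b R i v) (R.rho j) (R.compat j)).1) }
  ppgCorr_bdry := by
    intro i R B' v j
    by_cases h : j = i
    · subst h
      dsimp only
      rw [dif_pos rfl, dif_pos rfl]
      exact (b j).ppgBACorr_bB (R.rho j) v
    · dsimp only
      rw [dif_neg h, dif_neg h]
      exact (b j).ppgABCorr_bB (R.rho j) _

end Star

/-!
Over the uncertain corr ⊥, each binary lens propagates states by a "nearest state" map, and
the identity lens in the middle just passes updates through, so the star composition
propagates `B₁ → B₂` by the composite `g₂ ∘ f₁` and `B₂ → B₁` by `g₁ ∘ f₂`. A single lens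
round-trips because `f ∘ g ∘ f = f` and `g ∘ f ∘ g = g`, but these identities need not survive
composition: from `0`, the forward propagation gives `0 ↦ 2 ↦ 4`, whereas the round trip
continues `4 ↦ 5 ↦ 6 ↦ 6 ↦ 7`.
-/

def codisc (S : Type) : ModelSpace where
  Obj := S
  Hom := fun _ _ => Unit
  id := fun _ => ()
  comp := fun _ _ => ()
  id_comp := fun _ => rfl
  comp_id := fun _ => rfl
  assoc := fun _ _ _ => rfl
  K := fun _ _ => True
  D := fun _ _ => True
  mergeObj := fun {_ A1 _} _ _ _ => A1
  merge1 := fun _ _ _ => ()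
  merge2 := fun _ _ _ => ()
  merge_comm := fun _ _ _ => rfl

section IdLens

variable {ι : Type} (A : ModelSpace)

theorem idLens_wellBehaved (hK : ∀ {X Y : A.Obj} (u : A.Hom X Y), A.K u (A.id Y)) :
    (idLens ι A).WellBehaved where
  stab_obj _ _ _ := rfl
  stab_ppg _ _ _ _ := HEq.rfl
  stab_amend _ _ := HEq.rfl
  stab_corr _ _ := rfl
  reflect1 _ _ _ u := hK u
  reflect2_obj _ _ _ _ _ _ := rfl
  reflect2 _ _ _ u _ _ := heq_of_eq (A.comp_id u)
  reflect3_obj _ _ _ _ := rfl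
  reflect3 _ _ _ _ := HEq.rfl

theorem idLens_invertible : (idLens ι A).Invertible :=
  fun _ _ _ _ _ _ => ⟨rfl, HEq.rfl⟩

theorem idLens_closedUpd (i : ι) {X A' : A.Obj} (u : A.Hom X A') :
    (idLens ι A).ClosedUpd i u :=
  fun _ _ => ⟨rfl, HEq.rfl⟩

end IdLens

section NearestLens

variable {β α : Type} (f : β → α) (g : α → β)

/-- `none` is the uncertain state `⊥` and the corr `none` is `(⊥, ⊥)`: over it an update to a
certain state is propagated along the nearest-state maps `f` and `g`, while over a certain corr
it is propagated to the identity. -/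
def nearestLens : BLens (codisc (Option β)) (codisc (Option α)) where
  Corr := Option (β × α)
  bB := Option.map Prod.fst
  bA := Option.map Prod.snd
  ppgBAObj := fun R {B'} _ => match R with
    | none => B'.map f
    | some p => B'.map (fun _ => p.2)
  ppgBA := fun _ _ _ => ()
  amendBObj := fun _ {B'} _ => B'
  amendB := fun _ _ _ => ()
  ppgBACorr := fun R {B'} _ => match R, B' with
    | none, none => none
    | none, some x => some (x, f x)
    | some _, none => none
    | some p, some x => some (x, p.2)
  ppgBACorr_bB := by intro R B' _; cases R <;> cases B' <;> rfl
  ppgBACorr_bA := by intro R B' _; cases R <;> cases B' <;> rfl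
  ppgABObj := fun R {A'} _ => match R with
    | none => A'.map g
    | some p => A'.map (fun _ => p.1)
  ppgAB := fun _ _ _ => ()
  amendAObj := fun _ {A'} _ => A'
  amendA := fun _ _ _ => ()
  ppgABCorr := fun R {A'} _ => match R, A' with
    | none, none => none
    | none, some y => some (g y, y)
    | some _, none => none
    | some p, some y => some (p.1, y)
  ppgABCorr_bB := by intro R A' _; cases R <;> cases A' <;> rfl
  ppgABCorr_bA := by intro R A' _; cases R <;> cases A' <;> rfl

theorem nearestLens_wellBehaved : (nearestLens f g).WellBehaved where
  stab_obj i R j := by cases i <;> cases j <;> cases R <;> rfl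
  stab_ppg i _ j h := by cases i <;> cases j <;> first | exact absurd rfl h | exact HEq.rfl
  stab_amend i _ := by cases i <;> exact HEq.rfl
  stab_corr i R := by cases i <;> cases R <;> rfl
  reflect1 i _ _ _ := by cases i <;> trivial
  reflect2_obj i _ _ _ j h := by cases i <;> cases j <;> first | exact absurd rfl h | rfl
  reflect2 i _ _ _ j h := by cases i <;> cases j <;> first | exact absurd rfl h | exact HEq.rfl
  reflect3_obj i _ _ _ := by cases i <;> rfl
  reflect3 i _ _ _ := by cases i <;> exact HEq.rfl

theorem nearestLens_invertible (hf : ∀ x, f (g (f x)) = f x) (hg : ∀ y, g (f (g y)) = g y) :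
    (nearestLens f g).Invertible := by
  intro i R A' _ j hj
  cases i <;> cases j
  · exact absurd rfl hj
  · refine ⟨?_, HEq.rfl⟩
    cases R <;> cases A' <;> first | rfl | exact congrArg some (hf _)
  · refine ⟨?_, HEq.rfl⟩
    cases R <;> cases A' <;> first | rfl | exact congrArg some (hg _)
  · exact absurd rfl hj

theorem nearestLens_closedA {X A' : Option α} (v : (codisc (Option α)).Hom X A') :
    (nearestLens f g).ClosedA v :=
  fun _ _ => ⟨rfl, HEq.rfl⟩

end NearestLens

section StarOfNearestLenses

variable {β₁ β₂ α : Type} (f₁ : β₁ → α) (g₁ : α → β₁) (f₂ : β₂ → α) (g₂ : α → β₂)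

def nearestSpaces (β₁ β₂ : Type) : Bool → ModelSpace
  | false => codisc (Option β₁)
  | true => codisc (Option β₂)

def nearestFeet :
    ∀ i : Bool, BLens (nearestSpaces β₁ β₂ i) ((idLens Bool (codisc (Option α))).Sp i)
  | false => nearestLens f₁ g₁
  | true => nearestLens f₂ g₂

theorem nearestFeet_closedA (j : Bool) {X A' : Option α} (v : (codisc (Option α)).Hom X A') :
    (nearestFeet f₁ g₁ f₂ g₂ j).ClosedA v := by
  cases j <;> exact nearestLens_closedA _ _ v

theorem star_nearestFeet_not_invertible (x : β₁)
    (hx : g₂ (f₁ (g₁ (f₂ (g₂ (f₁ x))))) ≠ g₂ (f₁ x))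
    (J1 : ∀ (i : Bool) (R : (nearestFeet f₁ g₁ f₂ g₂ i).Corr) {B' : (nearestSpaces β₁ β₂ i).Obj}
      (u : (nearestSpaces β₁ β₂ i).Hom ((nearestFeet f₁ g₁ f₂ g₂ i).bB R) B'),
      (idLens Bool (codisc (Option α))).ClosedUpd i ((nearestFeet f₁ g₁ f₂ g₂ i).ppgBA R u))
    (J2 : ∀ (i j : Bool) (hj : j ≠ i) (S : Option α) {A' : Option α}
      (u : (codisc (Option α)).Hom S A'),
      (nearestFeet f₁ g₁ f₂ g₂ j).ClosedA ((idLens Bool (codisc (Option α))).ppg i S u j hj)) :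
    ¬ (SymLens.star (idLens Bool (codisc (Option α))) (nearestSpaces β₁ β₂)
      (nearestFeet f₁ g₁ f₂ g₂) J1 J2).Invertible := by
  intro hinv
  let bottom : StarCorr (idLens Bool (codisc (Option α))) (nearestSpaces β₁ β₂)
      (nearestFeet f₁ g₁ f₂ g₂) :=
    ⟨none, fun | false => (none : Option (β₁ × α)) | true => (none : Option (β₂ × α)),
      fun i => by cases i <;> rfl⟩
  have roundTrip := (hinv false bottom (A' := some x) () true nofun).1
  exact hx (Option.some.inj roundTrip)

end StarOfNearestLenses

inductive StA : Type | a2 | a5 | a6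
  deriving DecidableEq

inductive StB₁ : Type | b0 | b2 | b6
  deriving DecidableEq

inductive StB₂ : Type | c4 | c7
  deriving DecidableEq

def b₁ToA : StB₁ → StA | .b0 => .a2 | .b2 => .a2 | .b6 => .a6

def aToB₁ : StA → StB₁ | .a2 => .b0 | .a5 => .b6 | .a6 => .b6

def b₂ToA : StB₂ → StA | .c4 => .a5 | .c7 => .a6

def aToB₂ : StA → StB₂ | .a2 => .c4 | .a5 => .c4 | .a6 => .c7

/-- Star composition does not preserve invertibility: there are
well-behaved invertible binary lenses `b₁, b₂` and a central binary identity lens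
satisfying the junction conditions whose star composition fails weak invertibility. -/
theorem stmt12 :
    ∃ (A : ModelSpace) (Bsp : Bool → ModelSpace)
      (b : ∀ i : Bool, BLens (Bsp i) ((idLens Bool A).Sp i))
      (J1 : ∀ (i : Bool) (R : (b i).Corr) {B' : (Bsp i).Obj}
        (u : (Bsp i).Hom ((b i).bB R) B'),
        (idLens Bool A).ClosedUpd i ((b i).ppgBA R u))
      (J2 : ∀ (i j : Bool) (hj : j ≠ i) (S : (idLens Bool A).Corr)
        {A' : ((idLens Bool A).Sp i).Obj}
        (u : ((idLens Bool A).Sp i).Hom ((idLens Bool A).bdry i S) A'),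
        (b j).ClosedA ((idLens Bool A).ppg i S u j hj)),
      (∀ i, (b i).WellBehaved ∧ (b i).Invertible) ∧
      (idLens Bool A).WellBehaved ∧ (idLens Bool A).Invertible ∧
      ¬ (SymLens.star (idLens Bool A) Bsp b J1 J2).Invertible := by
  have J1 := fun i R {B'} u => idLens_closedUpd (codisc (Option StA)) i
    ((nearestFeet b₁ToA aToB₁ b₂ToA aToB₂ i).ppgBA (B' := B') R u)
  have J2 := fun (i j : Bool) (hj : j ≠ i) (S : Option StA) {A'} u =>
    nearestFeet_closedA b₁ToA aToB₁ b₂ToA aToB₂ j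
      ((idLens Bool (codisc (Option StA))).ppg i S (A' := A') u j hj)
  refine ⟨_, _, nearestFeet b₁ToA aToB₁ b₂ToA aToB₂, J1, J2, ?_,
    idLens_wellBehaved _ fun _ => trivial, idLens_invertible _,
    star_nearestFeet_not_invertible _ _ _ _ .b0 (by decide) J1 J2⟩
  rintro (_ | _)
  · exact ⟨nearestLens_wellBehaved _ _,
      nearestLens_invertible _ _ (by rintro (_ | _ | _) <;> rfl) (by rintro (_ | _ | _) <;> rfl)⟩
  · exact ⟨nearestLens_wellBehaved _ _,
      nearestLens_invertible _ _ (by rintro (_ | _) <;> rfl) (by rintro (_ | _ | _) <;> rfl)⟩
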